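/- For every positive integer i, the polynomial identity ∑_{k=1}^{i+1} (b(i,1,k)/k!)·t^k = (1/(i+1)!)·t(t+1)(t+2)⋯(t+i) holds in ℚ[t], where b(i,1,k) = ∑_{(l₁,…,l_k)∈P(k,i+1)} 1/(l₁⋯l_k). -/

import Mathlib

open Finset Polynomial

/-- The set of `k`-tuples of positive integers summing to `n`. -/
def P (k n : ℕ) : Finset (Fin k → ℕ) :=
  (Finset.Nat.antidiagonalTuple k n).filter fun l => ∀ i, 0 < l i

/-- `∑_{(l₁,…,l_k)∈P(k,n)} 1/(l₁⋯l_k)`. -/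
def S (k n : ℕ) : ℚ := ∑ l ∈ P k n, (∏ i, (l i : ℚ))⁻¹

/-- `e_l(1,2,…,m)` : the l-th elementary symmetric polynomial evaluated at 1,…,m. -/
def esym (m l : ℕ) : ℚ := (((Finset.range m).val.map fun i => ((i : ℚ) + 1)).esymm l)

/-!
Weighting each composition `l` of `n` by `1/∏ lᵢ` and using `n = ∑ⱼ lⱼ` together with the symmetry
of the parts, `n · S(k+1, n) = (k+1) · ∑_{a<n} S(k, a)`: the factor `l₀` cancels in the weight and
removing the part `l₀ = n - a` leaves a composition of `a` into `k` parts. Differencing in `n` gives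
`(n+1) S(k+1, n+1) = n S(k+1, n) + (k+1) S(k, n)`, which says that `Fₙ = ∑ₖ S(k, n)/k! tᵏ` satisfies
`(n+1) Fₙ₊₁ = (t+n) Fₙ`. Since `F₀ = 1`, this gives `n! Fₙ = t(t+1)⋯(t+n-1)`.
-/

lemma mem_P {k n : ℕ} {l : Fin k → ℕ} : l ∈ P k n ↔ (∑ i, l i = n) ∧ ∀ i, 0 < l i := by
  simp [P, Finset.Nat.mem_antidiagonalTuple]

lemma S_zero_left (n : ℕ) : S 0 n = if n = 0 then 1 else 0 := by
  have hP : P 0 n = if n = 0 then {Fin.elim0} else ∅ := by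
    ext l
    split_ifs <;> simp [mem_P, Subsingleton.elim l Fin.elim0, eq_comm, *]
  split_ifs at hP ⊢ <;> simp [S, hP]

lemma S_eq_zero_of_lt {k n : ℕ} (h : n < k) : S k n = 0 := by
  suffices P k n = ∅ by simp [S, this]
  refine Finset.eq_empty_of_forall_notMem fun l hl => ?_
  obtain ⟨hsum, hpos⟩ := mem_P.1 hl
  have : k ≤ ∑ i, l i := by
    simpa using Finset.card_nsmul_le_sum univ l 1 fun i _ => hpos i
  omega

lemma sum_P_comp_perm {k n : ℕ} (σ : Equiv.Perm (Fin k)) (f : (Fin k → ℕ) → ℚ) :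
    ∑ l ∈ P k n, f (l ∘ σ) = ∑ l ∈ P k n, f l := by
  have hperm (τ : Equiv.Perm (Fin k)) {l : Fin k → ℕ} (hl : l ∈ P k n) : l ∘ τ ∈ P k n := by
    rw [mem_P] at hl ⊢
    exact ⟨(Equiv.sum_comp τ l).trans hl.1, fun i => hl.2 _⟩
  refine Finset.sum_nbij' (· ∘ σ) (· ∘ σ.symm) (fun l => hperm σ) (fun l => hperm σ.symm)
    (fun l _ => ?_) (fun l _ => ?_) (fun l _ => rfl) <;> ext i <;> simp

lemma sum_P_succ_inv_prod_tail (k n : ℕ) :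
    ∑ l ∈ P (k + 1) n, (∏ i : Fin k, (l i.succ : ℚ))⁻¹ = ∑ a ∈ range n, S k a := by
  simp only [S]
  rw [Finset.sum_sigma']
  symm
  refine Finset.sum_nbij' (fun p => Fin.cons (n - p.1) p.2)
    (fun l => ⟨∑ i : Fin k, l i.succ, Fin.tail l⟩) ?_ ?_ ?_ ?_ (fun _ _ => rfl)
  · rintro ⟨a, l⟩ h
    simp only [mem_sigma, mem_range, mem_P] at h
    obtain ⟨ha, hsum, hpos⟩ := h
    refine mem_P.2 ⟨?_, Fin.cases (by simpa using ha) (by simpa using hpos)⟩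
    simp only [Fin.sum_univ_succ, Fin.cons_zero, Fin.cons_succ]
    omega
  · intro l h
    obtain ⟨hsum, hpos⟩ := mem_P.1 h
    rw [Fin.sum_univ_succ] at hsum
    have := hpos 0
    simp only [mem_sigma, mem_range, mem_P]
    exact ⟨by omega, rfl, fun i => hpos i.succ⟩
  · rintro ⟨a, l⟩ h
    simp only [mem_sigma, mem_P] at h
    simp [h.2.1]
  · intro l h
    obtain ⟨hsum, -⟩ := mem_P.1 h
    rw [Fin.sum_univ_succ] at hsum
    simp only
    rw [show n - ∑ i : Fin k, l i.succ = l 0 by omega]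
    exact Fin.cons_self_tail l

lemma sum_P_mul_inv_prod (k n : ℕ) (j : Fin (k + 1)) :
    ∑ l ∈ P (k + 1) n, (l j : ℚ) * (∏ i, (l i : ℚ))⁻¹ = ∑ a ∈ range n, S k a := by
  have hswap : ∀ l : Fin (k + 1) → ℕ, (l j : ℚ) * (∏ i, (l i : ℚ))⁻¹
      = ((l ∘ Equiv.swap 0 j) 0 : ℚ) * (∏ i, ((l ∘ Equiv.swap 0 j) i : ℚ))⁻¹ := fun l => by
    simp only [Function.comp_apply, Equiv.swap_apply_left,
      Equiv.prod_comp (Equiv.swap 0 j) (fun i => (l i : ℚ))]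
  simp_rw [hswap, sum_P_comp_perm (Equiv.swap 0 j) (fun l => (l 0 : ℚ) * (∏ i, (l i : ℚ))⁻¹),
    ← sum_P_succ_inv_prod_tail]
  refine Finset.sum_congr rfl fun l hl => ?_
  have h0 : (l 0 : ℚ) ≠ 0 := Nat.cast_ne_zero.2 (mem_P.1 hl |>.2 0).ne'
  rw [Fin.prod_univ_succ, mul_inv, ← mul_assoc, mul_inv_cancel₀ h0, one_mul]

lemma natCast_mul_S_succ (k n : ℕ) :
    (n : ℚ) * S (k + 1) n = (k + 1) * ∑ a ∈ range n, S k a := by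
  calc (n : ℚ) * S (k + 1) n
      = ∑ l ∈ P (k + 1) n, ∑ j, (l j : ℚ) * (∏ i, (l i : ℚ))⁻¹ := by
        rw [S, Finset.mul_sum]
        refine Finset.sum_congr rfl fun l hl => ?_
        rw [← Finset.sum_mul, ← (mem_P.1 hl).1, Nat.cast_sum]
    _ = (k + 1) * ∑ a ∈ range n, S k a := by
        rw [Finset.sum_comm]
        simp [sum_P_mul_inv_prod]

lemma S_succ_succ (k n : ℕ) :
    ((n : ℚ) + 1) * S (k + 1) (n + 1) = n * S (k + 1) n + (k + 1) * S k n := by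
  have h := natCast_mul_S_succ k (n + 1)
  rw [Finset.sum_range_succ, mul_add, ← natCast_mul_S_succ] at h
  push_cast at h
  exact h

noncomputable def SPoly (n : ℕ) : ℚ[X] :=
  ∑ k ∈ range (n + 1), C (S k n / k.factorial) * X ^ k

lemma coeff_SPoly (n m : ℕ) : (SPoly n).coeff m = S m n / m.factorial := by
  simp only [SPoly, finsetSum_coeff, coeff_C_mul, coeff_X_pow, mul_ite, mul_one, mul_zero,
    Finset.sum_ite_eq, mem_range]
  split_ifs with hm
  · rfl
  · rw [S_eq_zero_of_lt (by omega), zero_div]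

lemma SPoly_zero : SPoly 0 = 1 := by
  simp [SPoly, S_zero_left]

lemma C_mul_SPoly_succ (n : ℕ) : C ((n : ℚ) + 1) * SPoly (n + 1) = (X + C (n : ℚ)) * SPoly n := by
  ext (_ | m)
  · rcases n.eq_zero_or_pos with rfl | hn
    · simp [coeff_SPoly, S_zero_left]
    · simp [coeff_SPoly, S_zero_left, hn.ne']
  · simp only [coeff_C_mul, add_mul, coeff_add, coeff_X_mul, coeff_SPoly]
    push_cast [Nat.factorial_succ]
    field_simp
    linear_combination S_succ_succ m n

lemma C_factorial_mul_SPoly (n : ℕ) :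
    C (n.factorial : ℚ) * SPoly n = ∏ j ∈ range n, (X + C (j : ℚ)) := by
  induction n with
  | zero => simp [SPoly_zero]
  | succ n ih =>
    rw [prod_range_succ, ← ih, Nat.factorial_succ, Nat.cast_mul, C_mul, mul_comm (C _), mul_assoc,
      Nat.cast_succ, C_mul_SPoly_succ]
    ring

theorem stmt3_general (i : ℕ) :
    ∑ k ∈ Finset.Icc 1 (i + 1), Polynomial.C (S k (i + 1) / k.factorial) * X ^ k
      = Polynomial.C (1 / ((i + 1).factorial : ℚ)) *
        ∏ j ∈ Finset.range (i + 1), (X + Polynomial.C (j : ℚ)) := by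
  have hsum : ∑ k ∈ Icc 1 (i + 1), C (S k (i + 1) / k.factorial) * X ^ k = SPoly (i + 1) := by
    rw [SPoly, sum_range_eq_add_Ico _ (by omega), S_zero_left, if_neg (by omega)]
    simp [Finset.Ico_add_one_right_eq_Icc]
  have hfact : ((i + 1).factorial : ℚ) ≠ 0 := by positivity
  rw [hsum, ← C_factorial_mul_SPoly, ← mul_assoc, ← C_mul, one_div_mul_cancel hfact, C_1, one_mul]

theorem stmt3 (i : ℕ) (hi : 0 < i) :
    ∑ k ∈ Finset.Icc 1 (i + 1), Polynomial.C (S k (i + 1) / k.factorial) * X ^ k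
      = Polynomial.C (1 / ((i + 1).factorial : ℚ)) *
        ∏ j ∈ Finset.range (i + 1), (X + Polynomial.C (j : ℚ)) :=
  stmt3_general i
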